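/- Let C = (c_{mk}) = (I − P^T)^{-1}. Then for all indices m, l ∈ {1,…,K} one has c_{ml} ≤ c_{mm}: every entry of each row of (I − P^T)^{-1} is bounded above by the diagonal entry of that row. -/

import Mathlib

open Matrix Finset Filter Topology

namespace Matrix

variable {n : Type*} [Fintype n] [DecidableEq n] {P : Matrix n n ℝ}

theorem sum_pow_apply_le_one (hP : ∀ i j, 0 ≤ P i j) (hrow : ∀ i, ∑ j, P i j ≤ 1)
    (k : ℕ) (i : n) : ∑ j, (P ^ k) i j ≤ 1 := by
  induction k with
  | zero => simp [one_apply]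
  | succ k ih =>
    calc ∑ j, (P ^ (k + 1)) i j = ∑ l, (P ^ k) i l * ∑ j, P l j := by
          simp only [pow_succ, mul_apply, mul_sum]
          exact sum_comm
      _ ≤ ∑ l, (P ^ k) i l :=
          sum_le_sum fun l _ => mul_le_of_le_one_right (pow_apply_nonneg hP k i l) (hrow l)
      _ ≤ 1 := ih

theorem pow_apply_le_one (hP : ∀ i j, 0 ≤ P i j) (hrow : ∀ i, ∑ j, P i j ≤ 1)
    (k : ℕ) (i j : n) : (P ^ k) i j ≤ 1 :=
  (single_le_sum (fun l _ => pow_apply_nonneg hP k i l) (mem_univ j)).trans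
    (sum_pow_apply_le_one hP hrow k i)

/-- The partial Neumann sums `∑_{k<N} Pᵏ` increase entrywise and stay bounded, since they equal
`(1 - P)⁻¹ (1 - Pᴺ)` with `0 ≤ Pᴺ ≤ 1`; their limit `S` solves `S = 1 + P S`, hence is
`(1 - P)⁻¹`. -/
theorem inv_one_sub_apply_nonneg (hP : ∀ i j, 0 ≤ P i j) (hrow : ∀ i, ∑ j, P i j ≤ 1)
    (hunit : IsUnit (1 - P)) (i j : n) : 0 ≤ (1 - P)⁻¹ i j := by
  set B := (1 - P)⁻¹
  have hdet : IsUnit (1 - P).det := (isUnit_iff_isUnit_det _).mp hunit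
  set S : ℕ → Matrix n n ℝ := fun N => ∑ k ∈ range N, P ^ k
  have hmono : ∀ i j, Monotone fun N => S N i j := fun i j =>
    monotone_nat_of_le_succ fun N => by
      simp only [S, sum_range_succ, add_apply]
      exact le_add_of_nonneg_right (pow_apply_nonneg hP N i j)
  have hbdd : ∀ i j, BddAbove (Set.range fun N => S N i j) := by
    intro i j
    refine ⟨B i j + ∑ l, |B i l|, ?_⟩
    rintro _ ⟨N, rfl⟩
    have hS : S N = B - B * P ^ N :=
      calc S N = B * ((1 - P) * S N) := by rw [← mul_assoc, nonsing_inv_mul _ hdet, one_mul]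
        _ = B - B * P ^ N := by rw [mul_neg_geom_sum, mul_sub, mul_one]
    have hlow : -∑ l, |B i l| ≤ ∑ l, B i l * (P ^ N) l j := by
      rw [← sum_neg_distrib]
      refine sum_le_sum fun l _ => (neg_abs_le _).trans' (neg_le_neg ?_)
      rw [abs_mul, abs_of_nonneg (pow_apply_nonneg hP N l j)]
      exact mul_le_of_le_one_right (abs_nonneg _) (pow_apply_le_one hP hrow N l j)
    simp only [hS, sub_apply, mul_apply]
    linarith
  set s : Matrix n n ℝ := of fun i j => ⨆ N, S N i j
  have hlim : Tendsto S atTop (𝓝 s) :=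
    tendsto_pi_nhds.mpr fun i => tendsto_pi_nhds.mpr fun j =>
      tendsto_atTop_ciSup (hmono i j) (hbdd i j)
  have hS_succ : ∀ N, S (N + 1) = 1 + P * S N := fun N => geom_sum_succ.trans (add_comm _ _)
  have hfix : s = 1 + P * s :=
    tendsto_nhds_unique (((tendsto_add_atTop_iff_nat 1).mpr hlim).congr hS_succ)
      ((hlim.const_mul P).const_add 1)
  have hBs : B = s := inv_eq_right_inv (by rw [sub_mul, one_mul, sub_eq_iff_eq_add]; exact hfix)
  rw [hBs]
  exact le_ciSup_of_le (hbdd i j) 0 (by simp [S])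

theorem isUnit_one_sub_of_one_notMem_spectrum
    (h : (1 : ℂ) ∉ spectrum ℂ (P.map Complex.ofReal)) : IsUnit (1 - P) := by
  rw [spectrum.notMem_iff, map_one, isUnit_iff_isUnit_det] at h
  rw [isUnit_iff_isUnit_det, ← isUnit_map_iff Complex.ofRealHom, RingHom.map_det]
  convert h
  simp [RingHom.mapMatrix_apply, Matrix.map_sub]
  rfl

theorem mulVec_le_of_add_mulVec_le (hunit : IsUnit (1 - P))
    (hB : ∀ i j, 0 ≤ (1 - P)⁻¹ i j) {v y : n → ℝ} (hy : ∀ i, v i + (P *ᵥ y) i ≤ y i) (i : n) :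
    ((1 - P)⁻¹ *ᵥ v) i ≤ y i := by
  have hdet : IsUnit (1 - P).det := (isUnit_iff_isUnit_det _).mp hunit
  set w := (1 - P) *ᵥ y - v
  have hdiff : y i - ((1 - P)⁻¹ *ᵥ v) i = ((1 - P)⁻¹ *ᵥ w) i := by
    rw [← Pi.sub_apply, mulVec_sub, mulVec_mulVec, nonsing_inv_mul _ hdet, one_mulVec]
  have hw : ∀ k, 0 ≤ w k := fun k => by
    simp only [w, sub_mulVec, one_mulVec, Pi.sub_apply]
    linarith [hy k]
  have : 0 ≤ ((1 - P)⁻¹ *ᵥ w) i := sum_nonneg fun k _ => mul_nonneg (hB i k) (hw k)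
  linarith

/-- Column `j` of `(1 - P)⁻¹` is the solution `x` of `x = eⱼ + P x`, and `min x (x j)` is a
supersolution of the same equation, so it dominates `x`. -/
theorem inv_one_sub_apply_le_apply_self (hP : ∀ i j, 0 ≤ P i j)
    (hrow : ∀ i, ∑ j, P i j ≤ 1) (hunit : IsUnit (1 - P)) (i j : n) :
    (1 - P)⁻¹ i j ≤ (1 - P)⁻¹ j j := by
  have hB := inv_one_sub_apply_nonneg hP hrow hunit
  set e : n → ℝ := Pi.single j 1
  set x : n → ℝ := (1 - P)⁻¹ *ᵥ e
  have hx : ∀ k, x k = (1 - P)⁻¹ k j := fun k => by simp [x, e]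
  have hfix : ∀ k, e k + (P *ᵥ x) k = x k := fun k => by
    have : (1 - P) *ᵥ x = e := by
      rw [mulVec_mulVec, mul_nonsing_inv _ ((isUnit_iff_isUnit_det _).mp hunit), one_mulVec]
    rw [← this, sub_mulVec, one_mulVec, Pi.sub_apply, sub_add_cancel]
  set y : n → ℝ := fun k => min (x k) (x j)
  have hPy_le_x : ∀ k, (P *ᵥ y) k ≤ (P *ᵥ x) k := fun k =>
    sum_le_sum fun l _ => mul_le_mul_of_nonneg_left (min_le_left _ _) (hP k l)
  have hPy_le_xj : ∀ k, (P *ᵥ y) k ≤ x j := fun k =>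
    calc (P *ᵥ y) k ≤ ∑ l, P k l * x j :=
          sum_le_sum fun l _ => mul_le_mul_of_nonneg_left (min_le_right _ _) (hP k l)
      _ = (∑ l, P k l) * x j := (sum_mul ..).symm
      _ ≤ x j := mul_le_of_le_one_left (by rw [hx]; exact hB j j) (hrow k)
  have hy : ∀ k, e k + (P *ᵥ y) k ≤ y k := fun k => by
    refine le_min (by linarith [hfix k, hPy_le_x k]) ?_
    by_cases hk : k = j
    · subst hk; linarith [hfix k, hPy_le_x k]
    · simpa [e, hk] using hPy_le_xj k
  rw [← hx, ← hx]
  exact (mulVec_le_of_add_mulVec_le hunit hB hy i).trans (min_le_right _ _)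

end Matrix

/-- Lemma 3.1 (le:sush_os'): for `C = (I − Pᵀ)⁻¹`, every entry of each row is
bounded above by the diagonal entry of that row: `c_{ml} ≤ c_{mm}`. -/
theorem stmt_8 {K : ℕ} (P : Matrix (Fin (K + 1)) (Fin (K + 1)) ℝ)
    (hP : ∀ k l, 0 ≤ P k l) (hProw : ∀ k, ∑ l, P k l ≤ 1)
    (hspec : ∀ z ∈ spectrum ℂ (P.map Complex.ofReal), ‖z‖ < 1)
    (m l : Fin (K + 1)) :
    (((1 : Matrix (Fin (K + 1)) (Fin (K + 1)) ℝ) - Pᵀ)⁻¹) m l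
      ≤ (((1 : Matrix (Fin (K + 1)) (Fin (K + 1)) ℝ) - Pᵀ)⁻¹) m m := by
  have hunit : IsUnit (1 - P) :=
    isUnit_one_sub_of_one_notMem_spectrum fun h => by simpa using hspec 1 h
  rw [← transpose_one, ← transpose_sub, ← transpose_nonsing_inv]
  exact inv_one_sub_apply_le_apply_self hP hProw hunit l m
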